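/- Under the assumptions of the split conformal guarantee (exchangeable scores S_1,...,S_{n+1} with almost surely distinct values), the coverage probability P(S_{n+1} ≤ q̂) equals exactly ⌈(1-α)(n+1)⌉/(n+1), and hence is at most 1 - α + 1/(n+1). -/

import Mathlib

/-!
Let `R` be the number of scores strictly below `S_{n+1}`. Since the calibration list has `n`
entries and `S_{n+1}` is not below itself, `S_{n+1} ≤ q̂` (the `k`-th smallest calibration
score) holds exactly when `R < k`. Swapping two coordinates preserves the joint law, so the
events `{rank of S_j = r}` have the same probability for every `j`; when the scores are
distinct, exactly one `j` has rank `r`, so these `n + 1` events partition `Ω` up to a null set.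
Hence `R` is uniform on `{0, …, n}` and `P(R < k) = k / (n + 1)`.
-/

open MeasureTheory Finset

namespace List.SortedLE

variable {α : Type*} [LinearOrder α] {l : List α}

theorem le_getElem_of_mem_take (hl : l.SortedLE) {m : ℕ} (hm : m < l.length) {y : α}
    (hy : y ∈ l.take (m + 1)) : y ≤ l[m] := by
  obtain ⟨j, hj, rfl⟩ := List.mem_take_iff_getElem.mp hy
  exact hl.getElem_le_getElem_of_le (by omega)

theorem getElem_le_of_mem_drop (hl : l.SortedLE) {m : ℕ} (hm : m < l.length) {y : α}
    (hy : y ∈ l.drop m) : l[m] ≤ y := by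
  obtain ⟨j, hj, rfl⟩ := List.mem_drop_iff_getElem.mp hy
  exact hl.getElem_le_getElem_of_le (by omega)

theorem le_getElem_iff_countP_le (hl : l.SortedLE) {m : ℕ} (hm : m < l.length) (x : α) :
    x ≤ l[m] ↔ l.countP (· < x) ≤ m := by
  constructor
  · intro hx
    have hdrop : (l.drop m).countP (· < x) = 0 := List.countP_eq_zero.mpr fun y hy => by
      simpa using hx.trans (hl.getElem_le_of_mem_drop hm hy)
    calc l.countP (· < x) = (l.take m).countP (· < x) := by
          conv_lhs => rw [← l.take_append_drop m]
          rw [List.countP_append, hdrop, add_zero]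
      _ ≤ m := List.countP_le_length.trans (List.length_take_le _ _)
  · intro hcount
    by_contra! hlt
    have htake : (l.take (m + 1)).countP (· < x) = m + 1 := by
      rw [List.countP_eq_length.mpr fun y hy => by
        simpa using (hl.le_getElem_of_mem_take hm hy).trans_lt hlt]
      simp only [List.length_take]; omega
    have := (l.take_sublist (m + 1)).countP_le (p := (· < x))
    omega

end List.SortedLE

theorem List.countP_ofFn {α : Type*} {n : ℕ} (f : Fin n → α) (p : α → Prop)
    [DecidablePred p] :
    (List.ofFn f).countP p = #{i | p (f i)} := by
  rw [← Multiset.coe_countP, ← Fin.univ_val_map, Multiset.countP_map, Finset.card_def,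
    Finset.filter_val]

section Rank

variable {ι α : Type*} [Fintype ι] [LinearOrder α]

def rank (v : ι → α) (j : ι) : ℕ := #{i | v i < v j}

theorem rank_comp_perm (v : ι → α) (σ : Equiv.Perm ι) (j : ι) :
    rank (v ∘ σ) j = rank v (σ j) :=
  card_equiv σ (by simp)

theorem rank_lt_card (v : ι → α) (j : ι) : rank v j < Fintype.card ι :=
  card_lt_card (filter_ssubset.mpr ⟨j, mem_univ j, lt_irrefl _⟩)

theorem rank_lt_rank {v : ι → α} {i j : ι} (h : v i < v j) : rank v i < rank v j :=
  have hsub : ({k | v k < v i} : Finset ι) ⊆ ({k | v k < v j} : Finset ι) :=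
    monotone_filter_right _ fun _ _ hk => hk.trans h
  card_lt_card <| (ssubset_iff_of_subset hsub).mpr ⟨i, by simpa using h, by simp⟩

theorem rank_injective {v : ι → α} (hv : Function.Injective v) :
    Function.Injective (rank v) := by
  intro i j hij
  by_contra hne
  rcases lt_or_gt_of_ne (hv.ne hne) with h | h
  · exact (rank_lt_rank h).ne hij
  · exact (rank_lt_rank h).ne' hij

theorem existsUnique_rank_eq {v : ι → α} (hv : Function.Injective v) {r : ℕ}
    (hr : r < Fintype.card ι) : ∃! j, rank v j = r := by
  let e : ι → Fin (Fintype.card ι) := fun j => ⟨rank v j, rank_lt_card v j⟩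
  have he : Function.Bijective e := (Fintype.bijective_iff_injective_and_card e).mpr
    ⟨fun i j hij => rank_injective hv (congrArg Fin.val hij), (Fintype.card_fin _).symm⟩
  obtain ⟨j, hj⟩ := he.2 ⟨r, hr⟩
  exact ⟨j, congrArg Fin.val hj,
    fun i hi => he.1 (Fin.ext (hi.trans (congrArg Fin.val hj).symm))⟩

theorem rank_last_eq_card {n : ℕ} (v : Fin (n + 1) → α) :
    rank v (Fin.last n) = #{i : Fin n | v i.castSucc < v (Fin.last n)} := by
  rw [rank, card_filter, card_filter, Fin.sum_univ_castSucc]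
  simp

end Rank

theorem measurable_rank {ι : Type*} [Fintype ι] (j : ι) :
    Measurable fun v : ι → ℝ => rank v j := by
  simp only [rank, card_filter]
  exact Finset.measurable_sum _ fun i _ =>
    Measurable.ite (measurableSet_lt (measurable_pi_apply i) (measurable_pi_apply j))
      measurable_const measurable_const

section Exchangeable

variable {Ω ι : Type*} [MeasurableSpace Ω] [Fintype ι] {μ : Measure Ω} {S : ι → Ω → ℝ}

theorem measurableSet_rank_eq (hmeas : ∀ i, Measurable (S i)) (j : ι) (r : ℕ) :
    MeasurableSet {ω | rank (S · ω) j = r} :=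
  (measurable_rank j).comp (measurable_pi_lambda _ hmeas) (measurableSet_singleton r)

theorem measure_rank_eq_of_exchangeable (hmeas : ∀ i, Measurable (S i))
    (hexch : ∀ σ : Equiv.Perm ι,
      Measure.map (fun ω => fun i => S (σ i) ω) μ = Measure.map (fun ω => fun i => S i ω) μ)
    (j j' : ι) (r : ℕ) :
    μ {ω | rank (S · ω) j = r} = μ {ω | rank (S · ω) j' = r} := by
  classical
  have hB : MeasurableSet {v : ι → ℝ | rank v j' = r} :=
    measurable_rank j' (measurableSet_singleton r)
  have h := congrArg (· {v : ι → ℝ | rank v j' = r}) (hexch (Equiv.swap j j'))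
  rw [Measure.map_apply (measurable_pi_lambda _ fun i => hmeas _) hB,
    Measure.map_apply (measurable_pi_lambda _ hmeas) hB] at h
  convert h using 2
  · ext ω
    change _ ↔ rank ((S · ω) ∘ Equiv.swap j j') j' = r
    rw [rank_comp_perm, Equiv.swap_apply_right]
    exact Iff.rfl
  · rfl

theorem sum_measure_rank_eq [IsProbabilityMeasure μ] (hmeas : ∀ i, Measurable (S i))
    (hdist : ∀ᵐ ω ∂μ, Function.Injective fun i => S i ω) {r : ℕ}
    (hr : r < Fintype.card ι) :
    ∑ j, μ {ω | rank (S · ω) j = r} = 1 := by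
  set E : ι → Set Ω := fun j => {ω | rank (S · ω) j = r}
  have hE : ∀ j, MeasurableSet (E j) := (measurableSet_rank_eq hmeas · r)
  have hcover : ∀ᵐ ω ∂μ, ∑ j, (E j).indicator 1 ω = (1 : ENNReal) :=
    hdist.mono fun ω hω => by
      obtain ⟨j, hj, huniq⟩ := existsUnique_rank_eq hω hr
      rw [Finset.sum_eq_single_of_mem j (mem_univ j) fun i _ hij =>
        Set.indicator_of_notMem (s := E i) (fun hi => hij (huniq i hi)) 1]
      exact Set.indicator_of_mem (s := E j) hj 1
  calc ∑ j, μ (E j) = ∑ j, ∫⁻ ω, (E j).indicator 1 ω ∂μ := by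
        simp only [lintegral_indicator_one (hE _)]
    _ = ∫⁻ ω, ∑ j, (E j).indicator 1 ω ∂μ :=
        (lintegral_finsetSum _ fun j _ => measurable_one.indicator (hE j)).symm
    _ = 1 := by rw [lintegral_congr_ae hcover, lintegral_one, measure_univ]

theorem measure_rank_eq_inv_card [IsProbabilityMeasure μ] (hmeas : ∀ i, Measurable (S i))
    (hexch : ∀ σ : Equiv.Perm ι,
      Measure.map (fun ω => fun i => S (σ i) ω) μ = Measure.map (fun ω => fun i => S i ω) μ)
    (hdist : ∀ᵐ ω ∂μ, Function.Injective fun i => S i ω) (j : ι) {r : ℕ}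
    (hr : r < Fintype.card ι) :
    μ {ω | rank (S · ω) j = r} = (Fintype.card ι : ENNReal)⁻¹ := by
  refine ENNReal.eq_inv_of_mul_eq_one_left ?_
  rw [mul_comm, ← nsmul_eq_mul, ← Finset.card_univ, ← Finset.sum_const,
    ← sum_measure_rank_eq hmeas hdist hr]
  exact Finset.sum_congr rfl fun j' _ => measure_rank_eq_of_exchangeable hmeas hexch j j' r

theorem measure_rank_lt [IsProbabilityMeasure μ] (hmeas : ∀ i, Measurable (S i))
    (hexch : ∀ σ : Equiv.Perm ι,
      Measure.map (fun ω => fun i => S (σ i) ω) μ = Measure.map (fun ω => fun i => S i ω) μ)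
    (hdist : ∀ᵐ ω ∂μ, Function.Injective fun i => S i ω) (j : ι) {k : ℕ}
    (hk : k ≤ Fintype.card ι) :
    μ {ω | rank (S · ω) j < k} = k / Fintype.card ι := by
  have hpre : {ω | rank (S · ω) j < k} = (fun ω => rank (S · ω) j) ⁻¹' ↑(range k) := by
    ext; simp
  rw [hpre, ← sum_measure_preimage_singleton _ fun r _ => measurableSet_rank_eq hmeas j r]
  calc ∑ r ∈ range k, μ ((fun ω => rank (S · ω) j) ⁻¹' {r})
      = ∑ r ∈ range k, (Fintype.card ι : ENNReal)⁻¹ := Finset.sum_congr rfl fun r hr =>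
        measure_rank_eq_inv_card hmeas hexch hdist j ((mem_range.mp hr).trans_le hk)
    _ = k / Fintype.card ι := by simp [div_eq_mul_inv]

end Exchangeable

theorem le_getD_insertionSort_iff_rank_lt {α : Type*} [LinearOrder α] {n k : ℕ}
    (v : Fin (n + 1) → α) (hk0 : 0 < k) (hkn : k ≤ n) (d : α) :
    v (Fin.last n) ≤
        ((List.ofFn fun i : Fin n => v i.castSucc).insertionSort (· ≤ ·)).getD (k - 1) d
      ↔ rank v (Fin.last n) < k := by
  set l := List.ofFn fun i : Fin n => v i.castSucc
  have hlen : (l.insertionSort (· ≤ ·)).length = n := by simp [l]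
  rw [List.getD_eq_getElem _ _ (by omega), List.sortedLE_insertionSort.le_getElem_iff_countP_le,
    (List.perm_insertionSort _ l).countP_eq, List.countP_ofFn, rank_last_eq_card]
  omega

theorem natCeil_mul_div_le {x N : ℝ} (hx : 0 ≤ x) (hN : 0 < N) :
    (⌈x * N⌉₊ : ℝ) / N ≤ x + 1 / N := by
  rw [div_le_iff₀ hN, add_mul, one_div_mul_cancel hN.ne']
  exact (Nat.ceil_lt_add_one (by positivity)).le

/-- Exact split-conformal coverage: under exchangeability and a.s. distinct
scores, if `k = ⌈(1-α)(n+1)⌉ ≤ n` and `q̂` is the `k`-th smallest of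
`S_1, ..., S_n`, then `P(S_{n+1} ≤ q̂) = k / (n+1) ≤ 1 - α + 1/(n+1)`. -/
theorem split_conformal_exact_coverage
    {Ω : Type*} [MeasurableSpace Ω] (μ : Measure Ω) [IsProbabilityMeasure μ]
    (n : ℕ) (S : Fin (n + 1) → Ω → ℝ)
    (hmeas : ∀ i, Measurable (S i))
    (hexch : ∀ σ : Equiv.Perm (Fin (n + 1)),
      Measure.map (fun ω => fun i => S (σ i) ω) μ
        = Measure.map (fun ω => fun i => S i ω) μ)
    (hdist : ∀ᵐ ω ∂μ, Function.Injective fun i => S i ω)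
    (α : ℝ) (hα : α ∈ Set.Ioo (0 : ℝ) 1)
    (hk : ⌈(1 - α) * (n + 1)⌉₊ ≤ n) :
    (μ {ω | S (Fin.last n) ω ≤
        (((List.ofFn fun i : Fin n => S i.castSucc ω).insertionSort (· ≤ ·)).getD
          (⌈(1 - α) * (n + 1)⌉₊ - 1) 0)}).toReal
      = (⌈(1 - α) * (n + 1)⌉₊ : ℝ) / (n + 1)
    ∧ (⌈(1 - α) * (n + 1)⌉₊ : ℝ) / (n + 1) ≤ 1 - α + 1 / (n + 1) := by
  set k := ⌈(1 - α) * (n + 1)⌉₊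
  have hk0 : 0 < k := Nat.ceil_pos.mpr (mul_pos (by linarith [hα.2]) (by positivity))
  have hevent : {ω | S (Fin.last n) ω ≤
      (((List.ofFn fun i : Fin n => S i.castSucc ω).insertionSort (· ≤ ·)).getD (k - 1) 0)}
      = {ω | rank (S · ω) (Fin.last n) < k} :=
    Set.ext fun ω => le_getD_insertionSort_iff_rank_lt (S · ω) hk0 hk 0
  refine ⟨?_, natCeil_mul_div_le (by linarith [hα.2]) (by positivity)⟩
  rw [hevent, measure_rank_lt hmeas hexch hdist _ (by rw [Fintype.card_fin]; omega),
    ENNReal.toReal_div, Fintype.card_fin, ENNReal.toReal_natCast, ENNReal.toReal_natCast,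
    Nat.cast_succ]
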